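/- (Random Hoeffding inequality) Let M ~ Bin(m, p) with p > 0, and conditioned on M, let X₁,...,X_M be i.i.d. random variables taking values in [a, b]; let X̄ be their empirical mean (X̄ = E[X₁] if M = 0). Then for any t > 0, Pr(|X̄ − E[X₁]| ≥ t/p) ≤ 3·exp(−m·t²/(8p(b−a)²)). -/

import Mathlib

/-!
Split on the size of `M`. A Chernoff bound for the binomial law gives
`P(2 M ≤ m p) ≤ exp (-m p / 8)`. On `{M = r}` with `2 r > m p`, independence of `M` from
the `X i` reduces the event to one about `r` fixed summands, and Hoeffding's inequality bounds it
by `2 exp (-2 r t² / (p² (b - a)²)) ≤ 2 exp (-m t² / (8 p (b - a)²))`. The Chernoff term is below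
the same exponential exactly when `t ≤ p (b - a)`; for larger `t` the event is empty, since the
empirical mean and `E[X₁]` both lie in `[a, b]`.
-/

open MeasureTheory ProbabilityTheory Finset

/-- pmf of Bin(m,p) at r -/
noncomputable def binomPMF (m : ℕ) (p : ℝ) (r : ℕ) : ℝ :=
  (m.choose r : ℝ) * p ^ r * (1 - p) ^ (m - r)

lemma binomPMF_nonneg {m : ℕ} {p : ℝ} (hp : 0 ≤ p) (hp1 : p ≤ 1) (r : ℕ) :
    0 ≤ binomPMF m p r := by
  have : 0 ≤ 1 - p := by linarith
  unfold binomPMF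
  positivity

lemma binomPMF_eq_zero_of_lt {m r : ℕ} (p : ℝ) (h : m < r) : binomPMF m p r = 0 := by
  simp [binomPMF, Nat.choose_eq_zero_of_lt h]

lemma sum_binomPMF_mul_pow (m : ℕ) (p x : ℝ) :
    ∑ r ∈ range (m + 1), binomPMF m p r * x ^ r = (p * x + (1 - p)) ^ m := by
  rw [add_pow]
  refine sum_congr rfl fun r _ => ?_
  rw [binomPMF, mul_pow]
  ring

lemma sum_binomPMF_le_half_mean_le {m : ℕ} {p : ℝ} (hp : 0 ≤ p) (hp1 : p ≤ 1) :
    ∑ r ∈ (range (m + 1)).filter (fun r : ℕ => 2 * (r : ℝ) ≤ m * p), binomPMF m p r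
      ≤ Real.exp (-(m * p) / 8) := by
  set l := Real.log 2
  have hl : l < 3 / 4 := by linarith [Real.log_two_lt_d9]
  have hexp_l : Real.exp (-l) = 1 / 2 := by
    rw [Real.exp_neg, Real.exp_log two_pos, one_div]
  have hmp : 0 ≤ (m : ℝ) * p := by positivity
  -- exponential tilting by `2 ^ (m p / 2 - r) ≥ 1` on the lower half
  calc ∑ r ∈ (range (m + 1)).filter (fun r : ℕ => 2 * (r : ℝ) ≤ m * p), binomPMF m p r
      ≤ ∑ r ∈ range (m + 1), binomPMF m p r * Real.exp (l * (m * p / 2 - r)) := by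
        rw [sum_filter]
        refine sum_le_sum fun r _ => ?_
        split_ifs with hr
        · exact le_mul_of_one_le_right (binomPMF_nonneg hp hp1 r)
            (Real.one_le_exp (mul_nonneg (Real.log_nonneg one_le_two) (by linarith)))
        · exact mul_nonneg (binomPMF_nonneg hp hp1 r) (Real.exp_pos _).le
    _ = Real.exp (l * (m * p / 2)) * (p * (1 / 2) + (1 - p)) ^ m := by
        rw [← sum_binomPMF_mul_pow, mul_sum]
        refine sum_congr rfl fun r _ => ?_
        rw [← hexp_l, ← Real.exp_nat_mul, mul_left_comm, ← Real.exp_add]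
        ring_nf
    _ ≤ Real.exp (l * (m * p / 2)) * Real.exp (-(p / 2)) ^ m := by
        gcongr
        linarith [Real.add_one_le_exp (-(p / 2))]
    _ = Real.exp (-(m * p) * (1 - l) / 2) := by
        rw [← Real.exp_nat_mul, ← Real.exp_add]
        ring_nf
    _ ≤ Real.exp (-(m * p) / 8) := by
        refine Real.exp_le_exp.2 ?_
        nlinarith

noncomputable def empiricalMean (g : ℕ → ℝ) (r : ℕ) (c : ℝ) : ℝ :=
  if r = 0 then c else (∑ i ∈ range r, g i) / r

lemma measurable_empiricalMean (r : ℕ) (c : ℝ) :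
    Measurable fun g : ℕ → ℝ => empiricalMean g r c := by
  unfold empiricalMean
  split_ifs <;> fun_prop

lemma empiricalMean_mem_Icc {a b c : ℝ} {g : ℕ → ℝ} (hg : ∀ i, g i ∈ Set.Icc a b)
    (hc : c ∈ Set.Icc a b) (r : ℕ) : empiricalMean g r c ∈ Set.Icc a b := by
  unfold empiricalMean
  split_ifs with hr
  · exact hc
  have hr' : (0 : ℝ) < r := by positivity
  constructor
  · rw [le_div_iff₀ hr']
    simpa [mul_comm] using sum_le_sum fun i (_ : i ∈ range r) => (hg i).1
  · rw [div_le_iff₀ hr']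
    simpa [mul_comm] using sum_le_sum fun i (_ : i ∈ range r) => (hg i).2

lemma exp_neg_mul_div_eight_le {m : ℕ} {p t d : ℝ} (hp : 0 < p) (hd : 0 < d) (ht : 0 ≤ t)
    (htd : t ≤ p * d) : Real.exp (-(m * p) / 8) ≤ Real.exp (-(m * t ^ 2) / (8 * p * d ^ 2)) := by
  have hsq : m * t ^ 2 ≤ m * (p * d) ^ 2 := by gcongr
  rw [Real.exp_le_exp, neg_div, neg_div, neg_le_neg_iff,
    div_le_div_iff₀ (by positivity) (by norm_num)]
  nlinarith

lemma exp_neg_two_mul_sq_div_le {m r : ℕ} {p t d : ℝ} (hp : 0 < p) (hd : 0 < d)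
    (hr : m * p < 2 * r) :
    Real.exp (-2 * r * (t / p) ^ 2 / d) ≤ Real.exp (-(m * t ^ 2) / (8 * p * d)) := by
  have hK : 0 ≤ t ^ 2 / (p ^ 2 * d) := by positivity
  have hl : -2 * r * (t / p) ^ 2 / d = -(2 * r) * (t ^ 2 / (p ^ 2 * d)) := by field_simp
  have hr' : -(m * t ^ 2) / (8 * p * d) = -(m * p / 8) * (t ^ 2 / (p ^ 2 * d)) := by field_simp
  rw [hl, hr', Real.exp_le_exp]
  gcongr
  linarith

section

variable {Ω : Type*} [MeasurableSpace Ω] {μ : Measure Ω}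

lemma measureReal_preimage_eq_sum_binomPMF {M : Ω → ℕ} (hM : Measurable M) {m : ℕ} {p : ℝ}
    (hp : 0 ≤ p) (hp1 : p ≤ 1) (hMdist : ∀ r, μ {ω | M ω = r} = ENNReal.ofReal (binomPMF m p r))
    (P : ℕ → Prop) [DecidablePred P] :
    μ.real {ω | P (M ω)} = ∑ r ∈ (range (m + 1)).filter P, binomPMF m p r := by
  have hlaw : ∀ r, μ.map M {r} = ENNReal.ofReal (binomPMF m p r) := fun r => by
    rw [Measure.map_apply hM (measurableSet_singleton r)]
    exact hMdist r
  have hsum : μ {ω | P (M ω)} =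
      ∑ r ∈ (range (m + 1)).filter P, ENNReal.ofReal (binomPMF m p r) := by
    rw [show {ω | P (M ω)} = M ⁻¹' {r | P r} from rfl, ← Measure.map_apply hM (by measurability),
      ← Measure.tsum_indicator_apply_singleton _ _ (by measurability), sum_filter]
    simp_rw [hlaw, Set.indicator_apply, Set.mem_ofPred]
    apply tsum_eq_sum
    intro r hr
    rw [mem_range, not_lt] at hr
    simp [binomPMF_eq_zero_of_lt p (Nat.lt_of_succ_le hr)]
  rw [measureReal_def, hsum, ENNReal.toReal_sum fun _ _ => ENNReal.ofReal_ne_top]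
  exact sum_congr rfl fun r _ => ENNReal.toReal_ofReal (binomPMF_nonneg hp hp1 r)

variable [IsProbabilityMeasure μ]

lemma measure_le_measure_preimage_add_of_indepFun {β : Type*} [MeasurableSpace β] {M : Ω → ℕ}
    {S : Ω → β} (hM : Measurable M) (hMS : IndepFun M S μ) {B : ℕ → Set β}
    (hB : ∀ r, MeasurableSet (B r)) {E : Set Ω} (hE : ∀ ω ∈ E, S ω ∈ B (M ω)) (T : Set ℕ)
    {δ : ENNReal} (hδ : ∀ r ∉ T, μ (S ⁻¹' B r) ≤ δ) :
    μ E ≤ μ (M ⁻¹' T) + δ := by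
  have hcover : E ⊆ M ⁻¹' T ∪ ⋃ r ∈ Tᶜ, M ⁻¹' {r} ∩ S ⁻¹' B r := by
    intro ω hω
    by_cases hT : M ω ∈ T
    · exact Or.inl hT
    · exact Or.inr (Set.mem_biUnion hT ⟨rfl, hE ω hω⟩)
  calc μ E ≤ μ (M ⁻¹' T) + μ (⋃ r ∈ Tᶜ, M ⁻¹' {r} ∩ S ⁻¹' B r) :=
        (measure_mono hcover).trans (measure_union_le _ _)
    _ ≤ μ (M ⁻¹' T) + ∑' r : ↥Tᶜ, μ (M ⁻¹' {(r : ℕ)}) * δ := by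
        gcongr
        refine (measure_biUnion_le μ (Set.to_countable _) _).trans
          (ENNReal.tsum_le_tsum fun r => ?_)
        rw [hMS.measure_inter_preimage_eq_mul _ _ (measurableSet_singleton _) (hB r)]
        gcongr
        exact hδ r r.2
    _ = μ (M ⁻¹' T) + μ (M ⁻¹' Tᶜ) * δ := by
        rw [ENNReal.tsum_mul_right, tsum_measure_preimage_singleton (Set.to_countable _)
          fun r _ => hM (measurableSet_singleton r)]
    _ ≤ μ (M ⁻¹' T) + δ := by
        gcongr
        exact mul_le_of_le_one_left' prob_le_one

lemma measureReal_le_measureReal_preimage_add_of_indepFun {β : Type*} [MeasurableSpace β]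
    {M : Ω → ℕ} {S : Ω → β} (hM : Measurable M) (hMS : IndepFun M S μ) {B : ℕ → Set β}
    (hB : ∀ r, MeasurableSet (B r)) {E : Set Ω} (hE : ∀ ω ∈ E, S ω ∈ B (M ω)) (T : Set ℕ)
    {δ : ℝ} (hδ0 : 0 ≤ δ)
    (hδ : ∀ r ∉ T, μ.real (S ⁻¹' B r) ≤ δ) :
    μ.real E ≤ μ.real (M ⁻¹' T) + δ := by
  have := measure_le_measure_preimage_add_of_indepFun hM hMS hB hE T (δ := ENNReal.ofReal δ)
    fun r hr => (ENNReal.le_ofReal_iff_toReal_le (measure_ne_top _ _) hδ0).2 (hδ r hr)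
  rw [measureReal_def, measureReal_def, ← ENNReal.toReal_ofReal hδ0,
    ← ENNReal.toReal_add (measure_ne_top _ _) ENNReal.ofReal_ne_top]
  exact ENNReal.toReal_mono (by finiteness) this

lemma measureReal_abs_sum_range_sub_integral_ge_le {X : ℕ → Ω → ℝ}
    (hXmeas : ∀ i, Measurable (X i)) (hXindep : iIndepFun X μ) {a b : ℝ}
    (hX : ∀ i ω, X i ω ∈ Set.Icc a b) (n : ℕ) {ε : ℝ} (hε : 0 ≤ ε) :
    μ.real {ω | ε ≤ |∑ i ∈ range n, (X i ω - μ[X i])|}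
      ≤ 2 * Real.exp (-2 * ε ^ 2 / (n * (b - a) ^ 2)) := by
  have hsubG : ∀ i, HasSubgaussianMGF (fun ω => X i ω - μ[X i]) ((‖b - a‖₊ / 2) ^ 2) μ :=
    fun i => hasSubgaussianMGF_of_mem_Icc (hXmeas i).aemeasurable (ae_of_all _ (hX i))
  have hindep : iIndepFun (fun i ω => X i ω - μ[X i]) μ :=
    hXindep.comp (fun i x => x - ∫ ω, X i ω ∂μ) fun i => measurable_id.sub_const _
  have hindep_neg : iIndepFun (fun i ω => -(X i ω - μ[X i])) μ :=
    hXindep.comp (fun i x => -(x - ∫ ω, X i ω ∂μ)) fun i => (measurable_id.sub_const _).neg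
  have hvar : -ε ^ 2 / (2 * n * ((‖b - a‖₊ / 2) ^ 2 : NNReal))
      = -2 * ε ^ 2 / (n * (b - a) ^ 2) := by
    push_cast
    rw [Real.norm_eq_abs, div_pow, sq_abs]
    generalize (b - a) ^ 2 = v
    ring
  have hupper := HasSubgaussianMGF.measure_sum_range_ge_le_of_iIndepFun hindep
    (fun i _ => hsubG i) (n := n) hε
  have hlower := HasSubgaussianMGF.measure_sum_range_ge_le_of_iIndepFun hindep_neg
    (fun i _ => (hsubG i).neg) (n := n) hε
  rw [hvar] at hupper hlower
  calc μ.real {ω | ε ≤ |∑ i ∈ range n, (X i ω - μ[X i])|}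
      ≤ μ.real ({ω | ε ≤ ∑ i ∈ range n, (X i ω - μ[X i])}
          ∪ {ω | ε ≤ ∑ i ∈ range n, -(X i ω - μ[X i])}) := by
        refine measureReal_mono fun ω hω => ?_
        rcases le_abs'.1 (Set.mem_ofPred.1 hω) with h | h
        · right
          simp only [Set.mem_ofPred, sum_neg_distrib]
          linarith
        · exact Or.inl h
    _ ≤ _ := (measureReal_union_le _ _).trans (by linarith)

lemma measureReal_abs_empiricalMean_sub_ge_le {X : ℕ → Ω → ℝ}
    (hXmeas : ∀ i, Measurable (X i)) (hXindep : iIndepFun X μ) {a b : ℝ}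
    (hX : ∀ i ω, X i ω ∈ Set.Icc a b) {c : ℝ} (hmean : ∀ i, μ[X i] = c) (r : ℕ) {s : ℝ}
    (hs : 0 ≤ s) :
    μ.real {ω | s ≤ |empiricalMean (fun i => X i ω) r c - c|}
      ≤ 2 * Real.exp (-2 * r * s ^ 2 / (b - a) ^ 2) := by
  rcases eq_or_ne r 0 with rfl | hr
  · simpa using measureReal_le_one.trans one_le_two
  have hr' : (0 : ℝ) < r := by positivity
  have hevent : {ω | s ≤ |empiricalMean (fun i => X i ω) r c - c|}
      = {ω | r * s ≤ |∑ i ∈ range r, (X i ω - μ[X i])|} := by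
    ext ω
    have : empiricalMean (fun i => X i ω) r c - c = (∑ i ∈ range r, (X i ω - μ[X i])) / r := by
      simp only [empiricalMean, hr, if_false, hmean, sum_sub_distrib, sum_const, card_range,
        nsmul_eq_mul]
      field_simp
    rw [Set.mem_ofPred, Set.mem_ofPred, this, abs_div, abs_of_pos hr', le_div_iff₀ hr', mul_comm]
  rw [hevent]
  convert measureReal_abs_sum_range_sub_integral_ge_le hXmeas hXindep hX r
    (ε := r * s) (by positivity) using 3
  field_simp

end

/-- Random Hoeffding inequality: the empirical mean of a binomially-random number `M`
of i.i.d. variables in `[a,b]`, with `M` independent of the variables, concentrates. -/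
theorem random_hoeffding (Ω : Type*) [MeasurableSpace Ω]
    (μ : Measure Ω) [IsProbabilityMeasure μ]
    (m : ℕ) (p : ℝ) (hp : 0 < p) (hp1 : p ≤ 1)
    (M : Ω → ℕ) (hMmeas : Measurable M)
    (hMdist : ∀ r, μ {ω | M ω = r} = ENNReal.ofReal (binomPMF m p r))
    (a b : ℝ) (hab : a < b)
    (X : ℕ → Ω → ℝ) (hXmeas : ∀ i, Measurable (X i))
    (hXrange : ∀ i ω, X i ω ∈ Set.Icc a b)
    (hXid : ∀ i, Measure.map (X i) μ = Measure.map (X 0) μ)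
    (hXindep : iIndepFun X μ)
    (hMX : IndepFun M (fun ω i => X i ω) μ)
    (Xbar : Ω → ℝ)
    (hXbar : ∀ ω, Xbar ω =
      if M ω = 0 then ∫ ω', X 0 ω' ∂μ
      else (∑ i ∈ Finset.range (M ω), X i ω) / (M ω))
    (t : ℝ) (ht : 0 < t) :
    (μ {ω | t / p ≤ |Xbar ω - ∫ ω', X 0 ω' ∂μ|}).toReal ≤
      3 * Real.exp (-((m : ℝ) * t ^ 2) / (8 * p * (b - a) ^ 2)) := by
  set μbar := ∫ ω', X 0 ω' ∂μ
  set R := Real.exp (-((m : ℝ) * t ^ 2) / (8 * p * (b - a) ^ 2))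
  have hmean : ∀ i, μ[X i] = μbar := fun i =>
    (IdentDistrib.mk (hXmeas i).aemeasurable (hXmeas 0).aemeasurable (hXid i)).integral_eq
  have hμbar : μbar ∈ Set.Icc a b :=
    (convex_Icc a b).integral_mem isClosed_Icc (ae_of_all _ (hXrange 0))
      (Integrable.of_mem_Icc a b (hXmeas 0).aemeasurable (ae_of_all _ (hXrange 0)))
  obtain rfl : Xbar = fun ω => empiricalMean (fun i => X i ω) (M ω) μbar :=
    funext fun ω => (hXbar ω).trans rfl
  rcases lt_or_ge (p * (b - a)) t with htriv | ht_le
  · have hempty : {ω | t / p ≤ |empiricalMean (fun i => X i ω) (M ω) μbar - μbar|} = ∅ :=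
      Set.eq_empty_of_forall_notMem fun ω hω => (lt_div_iff₀' hp).2 htriv |>.not_ge <|
        hω.trans (Real.dist_le_of_mem_Icc (empiricalMean_mem_Icc (hXrange · ω) hμbar _) hμbar)
    rw [hempty, measure_empty, ENNReal.toReal_zero]
    positivity
  have hlarge : ∀ r ∉ {r : ℕ | 2 * (r : ℝ) ≤ m * p},
      μ.real {ω | t / p ≤ |empiricalMean (fun i => X i ω) r μbar - μbar|} ≤ 2 * R := fun r hr =>
    (measureReal_abs_empiricalMean_sub_ge_le hXmeas hXindep hXrange hmean r (by positivity)).trans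
      (mul_le_mul_of_nonneg_left (exp_neg_two_mul_sq_div_le hp (by positivity) (not_le.1 hr))
        zero_le_two)
  have hsmall : μ.real (M ⁻¹' {r : ℕ | 2 * (r : ℝ) ≤ m * p}) ≤ Real.exp (-(m * p) / 8) :=
    (measureReal_preimage_eq_sum_binomPMF hMmeas hp.le hp1 hMdist _).trans_le
      (sum_binomPMF_le_half_mean_le hp.le hp1)
  calc μ.real {ω | t / p ≤ |empiricalMean (fun i => X i ω) (M ω) μbar - μbar|}
      ≤ μ.real (M ⁻¹' {r : ℕ | 2 * (r : ℝ) ≤ m * p}) + 2 * R :=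
        measureReal_le_measureReal_preimage_add_of_indepFun hMmeas hMX
          (fun r => measurableSet_le measurable_const
            ((measurable_empiricalMean r μbar).sub_const μbar).abs)
          (fun ω hω => hω) _ (by positivity) hlarge
    _ ≤ 3 * R := by linarith [exp_neg_mul_div_eight_le (m := m) hp (sub_pos.2 hab) ht.le ht_le]
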